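/- arXiv:2511.19374 — 2 statements merged into one kernel-verified Lean document; each statement's English description precedes it below -/
import Mathlib

section
/- Let f : {-1,1}^n → ℝ be nonnegative and not identically zero, with multilinear extension, and define the score S_i(x) = x_i ∂_i f(x) / f(x) for x ∈ (-1,1)^n. Then for every i ∈ [n] and x ∈ (-1,1)^n, -|x_i|/(1 - |x_i|) ≤ S_i(x) ≤ |x_i|/(1 + |x_i|). -/
open Real Finset

/-- Map a Boolean to ±1. -/
noncomputable def sgn (b : Bool) : ℝ := if b then 1 else -1

/-- The unique multilinear extension of `f : {-1,1}^n → ℝ` to `ℝ^n`,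
written as `f(x) = ∑_{y ∈ {-1,1}^n} f(y) ∏_j (1 + y_j x_j)/2`. -/
noncomputable def mext {n : ℕ} (f : (Fin n → Bool) → ℝ) (x : Fin n → ℝ) : ℝ :=
  ∑ s : Fin n → Bool, f s * ∏ j, (1 + sgn (s j) * x j) / 2

/-- `‖f‖₁ = 2^{-n} ∑_{y ∈ {-1,1}^n} f(y)`. -/
noncomputable def l1norm {n : ℕ} (f : (Fin n → Bool) → ℝ) : ℝ :=
  (∑ s : Fin n → Bool, f s) / 2 ^ n

/-- Discrete partial derivative, which for multilinear functions agrees with ∂ᵢ. -/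
noncomputable def pd {n : ℕ} (g : (Fin n → ℝ) → ℝ) (i : Fin n) (x : Fin n → ℝ) : ℝ :=
  (g (Function.update x i 1) - g (Function.update x i (-1))) / 2

/-- The score `S_i(x) = x_i ∂_i f(x) / f(x)`. -/
noncomputable def score {n : ℕ} (f : (Fin n → Bool) → ℝ) (i : Fin n) (x : Fin n → ℝ) : ℝ :=
  x i * pd (mext f) i x / mext f x

lemma sgn_abs (b : Bool) : |sgn b| = 1 := by
  unfold sgn; cases b <;> simp

lemma mext_nonneg {n : ℕ} (f : (Fin n → Bool) → ℝ) (hf : ∀ s, 0 ≤ f s)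
    (y : Fin n → ℝ) (hy : ∀ k, |y k| ≤ 1) : 0 ≤ mext f y := by
  refine Finset.sum_nonneg fun s _ => mul_nonneg (hf s) (Finset.prod_nonneg fun j _ => ?_)
  have h : |sgn (s j) * y j| ≤ 1 := by rw [abs_mul, sgn_abs, one_mul]; exact hy j
  have := abs_le.1 h
  linarith [this.1]

lemma mext_pos {n : ℕ} (f : (Fin n → Bool) → ℝ) (hf : ∀ s, 0 ≤ f s) (hne : f ≠ 0)
    (y : Fin n → ℝ) (hy : ∀ k, |y k| < 1) : 0 < mext f y := by
  obtain ⟨s₀, hs₀⟩ := Function.ne_iff.1 hne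
  have hs₀' : 0 < f s₀ := lt_of_le_of_ne (hf s₀) (Ne.symm hs₀)
  refine Finset.sum_pos' (fun s _ => mul_nonneg (hf s) (Finset.prod_nonneg fun j _ => ?_))
    ⟨s₀, Finset.mem_univ s₀, mul_pos hs₀' (Finset.prod_pos fun j _ => ?_)⟩
  · have h : |sgn (s j) * y j| ≤ 1 := by
      rw [abs_mul, sgn_abs, one_mul]; exact (hy j).le
    have := abs_le.1 h
    linarith [this.1]
  · have h : |sgn (s₀ j) * y j| < 1 := by rw [abs_mul, sgn_abs, one_mul]; exact hy j
    have := abs_lt.1 h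
    linarith [this.1]

lemma mext_decomp {n : ℕ} (f : (Fin n → Bool) → ℝ) (x : Fin n → ℝ) (i : Fin n) :
    mext f x = (1 + x i) / 2 * mext f (Function.update x i 1)
      + (1 - x i) / 2 * mext f (Function.update x i (-1)) := by
  unfold mext
  rw [Finset.mul_sum, Finset.mul_sum, ← Finset.sum_add_distrib]
  refine Finset.sum_congr rfl fun s _ => ?_
  have h1 : ∀ (c : ℝ), (∏ j, (1 + sgn (s j) * Function.update x i c j) / 2)
      = (1 + sgn (s i) * c) / 2 * ∏ j ∈ univ.erase i, (1 + sgn (s j) * x j) / 2 := by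
    intro c
    rw [← Finset.mul_prod_erase univ _ (mem_univ i), Function.update_self]
    congr 1
    exact Finset.prod_congr rfl fun j hj => by
      rw [Function.update_of_ne (Finset.ne_of_mem_erase hj)]
  rw [h1, h1, ← Finset.mul_prod_erase univ (fun j => (1 + sgn (s j) * x j) / 2) (mem_univ i)]
  unfold sgn
  cases hs : s i <;> simp only [Bool.false_eq_true, reduceIte] <;> ring

/-- score bound. -/
theorem stmt2 {n : ℕ} (f : (Fin n → Bool) → ℝ) (hf : ∀ s, 0 ≤ f s) (hne : f ≠ 0)
    (x : Fin n → ℝ) (hx : ∀ k, |x k| < 1) (i : Fin n) :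
    -|x i| / (1 - |x i|) ≤ score f i x ∧ score f i x ≤ |x i| / (1 + |x i|) := by
  set A := mext f (Function.update x i 1) with hA
  set B := mext f (Function.update x i (-1)) with hB
  set t := x i with ht
  have htabs : |t| < 1 := hx i
  have hup : ∀ (c : ℝ), |c| ≤ 1 → ∀ k, |Function.update x i c k| ≤ 1 := by
    intro c hc k
    rcases eq_or_ne k i with rfl | hk
    · rwa [Function.update_self]
    · rw [Function.update_of_ne hk]; exact (hx k).le
  have hA0 : 0 ≤ A := mext_nonneg f hf _ (hup 1 (by norm_num))
  have hB0 : 0 ≤ B := mext_nonneg f hf _ (hup (-1) (by norm_num))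
  have hD : mext f x = (1 + t) / 2 * A + (1 - t) / 2 * B := mext_decomp f x i
  have hDpos : 0 < mext f x := mext_pos f hf hne x hx
  have hsc : score f i x = t * ((A - B) / 2) / ((1 + t) / 2 * A + (1 - t) / 2 * B) := by
    rw [score, pd, ← hA, ← hB, ← ht, ← hD]
  rw [hsc]
  rw [hD] at hDpos
  have h1 : 0 < 1 - |t| := by linarith
  have h2 : 0 < 1 + |t| := by linarith [abs_nonneg t]
  rcases abs_cases t with ⟨he, hsgn⟩ | ⟨he, hsgn⟩ <;> rw [he] <;> constructor
  · rw [div_le_div_iff₀ (by rw [he] at h1; linarith : (0:ℝ) < 1 - t) hDpos]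
    nlinarith [mul_nonneg hsgn hB0, mul_nonneg hsgn hA0]
  · rw [div_le_div_iff₀ hDpos (by rw [he] at h2; linarith : (0:ℝ) < 1 + t)]
    nlinarith [mul_nonneg hsgn hB0]
  · rw [div_le_div_iff₀ (by rw [he] at h1; linarith : (0:ℝ) < 1 - -t) hDpos]
    nlinarith [mul_nonneg (neg_nonneg.2 hsgn.le) hA0, mul_nonneg (neg_nonneg.2 hsgn.le) hB0]
  · rw [div_le_div_iff₀ hDpos (by rw [he] at h2; linarith : (0:ℝ) < 1 + -t)]
    nlinarith [mul_nonneg (neg_nonneg.2 hsgn.le) hA0, mul_nonneg (neg_nonneg.2 hsgn.le) hB0]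
end

section
/- Let h : {-1,1}^n → {0,1} and consider its multilinear polynomial extension to (-1,1)^n. Then for every x ∈ (-1,1)^n, ∑_{i=1}^n (1 - x_i²) (∂_i h(x))² ≤ h(x) - h(x)² (basic level-1 inequality). -/
open Real Finset

/-- The biased product weight. -/
noncomputable def wt {n : ℕ} (x : Fin n → ℝ) (s : Fin n → Bool) : ℝ :=
  ∏ j, (1 + sgn (s j) * x j) / 2

lemma sum_prod_bool {n : ℕ} (g : Fin n → Bool → ℝ) :
    ∑ s : Fin n → Bool, ∏ j, g j (s j) = ∏ j, (g j true + g j false) := by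
  rw [← Fintype.prod_sum fun j b => g j b]
  exact Finset.prod_congr rfl fun j _ => by simp [Fintype.sum_bool]

lemma sgn_sq (b : Bool) : sgn b * sgn b = 1 := by cases b <;> norm_num [sgn]

lemma wt_nonneg {n : ℕ} (x : Fin n → ℝ) (hx : ∀ i, |x i| < 1) (s : Fin n → Bool) :
    0 ≤ wt x s := by
  apply Finset.prod_nonneg
  intro j _
  have := abs_lt.1 (hx j)
  cases s j <;> simp [sgn] <;> linarith [this.1, this.2]

lemma sum_wt {n : ℕ} (x : Fin n → ℝ) : ∑ s : Fin n → Bool, wt x s = 1 := by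
  unfold wt
  rw [sum_prod_bool fun j b => (1 + sgn b * x j) / 2]
  rw [show (∏ j, ((1 + sgn true * x j) / 2 + (1 + sgn false * x j) / 2)) = ∏ _j : Fin n, (1:ℝ)
    from Finset.prod_congr rfl fun j _ => by simp [sgn]; ring]
  simp

lemma echi {n : ℕ} (x : Fin n → ℝ) (i : Fin n) :
    ∑ s : Fin n → Bool, (sgn (s i) - x i) * wt x s = 0 := by
  have hpt : ∀ s : Fin n → Bool, (sgn (s i) - x i) * wt x s =
      ∏ k, ((if k = i then sgn (s k) - x k else 1) * ((1 + sgn (s k) * x k) / 2)) := by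
    intro s
    rw [Finset.prod_mul_distrib, Finset.prod_ite_eq' Finset.univ i fun k => sgn (s k) - x k]
    simp [wt]
  rw [Finset.sum_congr rfl fun s _ => hpt s,
    sum_prod_bool fun k b => (if k = i then sgn b - x k else 1) * ((1 + sgn b * x k) / 2)]
  apply Finset.prod_eq_zero (Finset.mem_univ i)
  simp [sgn]
  ring

lemma echi2 {n : ℕ} (x : Fin n → ℝ) (i j : Fin n) :
    ∑ s : Fin n → Bool, (sgn (s i) - x i) * ((sgn (s j) - x j) * wt x s) =
      if i = j then 1 - (x i) ^ 2 else 0 := by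
  have hpt : ∀ s : Fin n → Bool, (sgn (s i) - x i) * ((sgn (s j) - x j) * wt x s) =
      ∏ k, ((if k = i then sgn (s k) - x k else 1) * ((if k = j then sgn (s k) - x k else 1) *
        ((1 + sgn (s k) * x k) / 2))) := by
    intro s
    rw [Finset.prod_mul_distrib, Finset.prod_mul_distrib,
      Finset.prod_ite_eq' Finset.univ i fun k => sgn (s k) - x k,
      Finset.prod_ite_eq' Finset.univ j fun k => sgn (s k) - x k]
    simp [wt]
  rw [Finset.sum_congr rfl fun s _ => hpt s,
    sum_prod_bool fun k b => (if k = i then sgn b - x k else 1) * ((if k = j then sgn b - x k else 1) *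
      ((1 + sgn b * x k) / 2))]
  by_cases hij : i = j
  · subst hij
    simp only [if_pos rfl]
    rw [show (∏ k, ((if k = i then sgn true - x k else 1) * ((if k = i then sgn true - x k else 1) *
        ((1 + sgn true * x k) / 2)) + (if k = i then sgn false - x k else 1) *
        ((if k = i then sgn false - x k else 1) * ((1 + sgn false * x k) / 2)))) =
        ∏ k, (if k = i then 1 - x k ^ 2 else 1) from Finset.prod_congr rfl fun k _ => by
          by_cases hk : k = i <;> simp [hk, sgn] <;> ring]
    rw [Finset.prod_ite_eq' Finset.univ i fun k => 1 - x k ^ 2]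
    simp
  · rw [if_neg hij]
    apply Finset.prod_eq_zero (Finset.mem_univ i)
    rw [if_pos rfl, if_pos rfl, if_neg hij, if_neg hij]
    simp [sgn]
    ring

lemma pd_formula {n : ℕ} (h : (Fin n → Bool) → ℝ) (x : Fin n → ℝ) (i : Fin n) :
    pd (mext h) i x = ∑ s : Fin n → Bool,
      h s * (sgn (s i) / 2 * ∏ k ∈ Finset.univ.erase i, (1 + sgn (s k) * x k) / 2) := by
  have hupd : ∀ (t : ℝ) (s : Fin n → Bool),
      (∏ j, (1 + sgn (s j) * Function.update x i t j) / 2) =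
      (∏ k ∈ Finset.univ.erase i, (1 + sgn (s k) * x k) / 2) * ((1 + sgn (s i) * t) / 2) := by
    intro t s
    rw [← Finset.prod_erase_mul Finset.univ _ (Finset.mem_univ i)]
    rw [Function.update_self]
    apply congrArg (· * _)
    exact Finset.prod_congr rfl fun k hk => by
      rw [Function.update_of_ne (Finset.ne_of_mem_erase hk)]
  unfold pd mext
  rw [div_eq_iff (by norm_num : (2:ℝ) ≠ 0), Finset.sum_mul, ← Finset.sum_sub_distrib]
  apply Finset.sum_congr rfl
  intro s _
  rw [hupd 1 s, hupd (-1) s]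
  ring

lemma dcoef {n : ℕ} (h : (Fin n → Bool) → ℝ) (x : Fin n → ℝ) (i : Fin n) :
    ∑ s : Fin n → Bool, h s * ((sgn (s i) - x i) * wt x s) =
      (1 - (x i) ^ 2) * pd (mext h) i x := by
  rw [pd_formula, Finset.mul_sum]
  apply Finset.sum_congr rfl
  intro s _
  have hwt : wt x s = (∏ k ∈ Finset.univ.erase i, (1 + sgn (s k) * x k) / 2) *
      ((1 + sgn (s i) * x i) / 2) := by
    unfold wt
    rw [← Finset.prod_erase_mul Finset.univ _ (Finset.mem_univ i)]
  rw [hwt]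
  have hsq := sgn_sq (s i)
  linear_combination h s * (∏ k ∈ Finset.univ.erase i, (1 + sgn (s k) * x k) / 2) * x i / 2 * hsq

/-- basic level-1 inequality for Boolean-valued functions. -/
theorem stmt3 {n : ℕ} (h : (Fin n → Bool) → ℝ) (hb : ∀ s, h s = 0 ∨ h s = 1)
    (x : Fin n → ℝ) (hx : ∀ i, |x i| < 1) :
    ∑ i, (1 - (x i) ^ 2) * (pd (mext h) i x) ^ 2 ≤ mext h x - (mext h x) ^ 2 := by
  set c := mext h x with hc
  set S := ∑ i, (1 - (x i) ^ 2) * (pd (mext h) i x) ^ 2 with hS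
  set T : (Fin n → Bool) → ℝ := fun s => ∑ i, pd (mext h) i x * (sgn (s i) - x i) with hT
  have hA0 : ∑ s : Fin n → Bool, wt x s = 1 := sum_wt x
  have hA1 : ∑ s : Fin n → Bool, h s * wt x s = c := rfl
  have hA2 : ∑ s : Fin n → Bool, (h s * h s) * wt x s = c := by
    rw [← hA1]
    apply Finset.sum_congr rfl
    intro s _
    rcases hb s with h0 | h0 <;> rw [h0] <;> ring
  have hA3 : ∑ s : Fin n → Bool, T s * wt x s = 0 := by
    have : ∀ s : Fin n → Bool, T s * wt x s =
        ∑ i, pd (mext h) i x * ((sgn (s i) - x i) * wt x s) := by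
      intro s; rw [hT, Finset.sum_mul]; exact Finset.sum_congr rfl fun i _ => by ring
    rw [Finset.sum_congr rfl fun s _ => this s, Finset.sum_comm]
    apply Finset.sum_eq_zero
    intro i _
    rw [← Finset.mul_sum, echi x i, mul_zero]
  have hA4 : ∑ s : Fin n → Bool, (h s * T s) * wt x s = S := by
    have : ∀ s : Fin n → Bool, (h s * T s) * wt x s =
        ∑ i, pd (mext h) i x * (h s * ((sgn (s i) - x i) * wt x s)) := by
      intro s; rw [hT, Finset.mul_sum, Finset.sum_mul]
      exact Finset.sum_congr rfl fun i _ => by ring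
    rw [Finset.sum_congr rfl fun s _ => this s, Finset.sum_comm, hS]
    apply Finset.sum_congr rfl
    intro i _
    rw [← Finset.mul_sum, dcoef h x i]
    ring
  have hA5 : ∑ s : Fin n → Bool, (T s * T s) * wt x s = S := by
    have : ∀ s : Fin n → Bool, (T s * T s) * wt x s =
        ∑ i, ∑ j, (pd (mext h) i x * pd (mext h) j x) *
          ((sgn (s i) - x i) * ((sgn (s j) - x j) * wt x s)) := by
      intro s
      rw [hT, Finset.sum_mul_sum, Finset.sum_mul]
      apply Finset.sum_congr rfl
      intro i _
      rw [Finset.sum_mul]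
      exact Finset.sum_congr rfl fun j _ => by ring
    rw [Finset.sum_congr rfl fun s _ => this s, Finset.sum_comm, hS]
    apply Finset.sum_congr rfl
    intro i _
    rw [Finset.sum_comm]
    have : ∀ j : Fin n, ∑ s : Fin n → Bool, (pd (mext h) i x * pd (mext h) j x) *
        ((sgn (s i) - x i) * ((sgn (s j) - x j) * wt x s)) =
        (pd (mext h) i x * pd (mext h) j x) * (if i = j then 1 - (x i) ^ 2 else 0) := by
      intro j
      rw [← Finset.mul_sum, echi2 x i j]
    rw [Finset.sum_congr rfl fun j _ => this j]
    simp [mul_ite]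
    ring
  have key : 0 ≤ ∑ s : Fin n → Bool, (h s - c - T s) ^ 2 * wt x s :=
    Finset.sum_nonneg fun s _ => mul_nonneg (sq_nonneg _) (wt_nonneg x hx s)
  have expand : ∑ s : Fin n → Bool, (h s - c - T s) ^ 2 * wt x s =
      ∑ s : Fin n → Bool, ((h s * h s) * wt x s) - (2 * c) * ∑ s : Fin n → Bool, (h s * wt x s)
      - 2 * ∑ s : Fin n → Bool, ((h s * T s) * wt x s) + c ^ 2 * ∑ s : Fin n → Bool, wt x s
      + (2 * c) * ∑ s : Fin n → Bool, (T s * wt x s)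
      + ∑ s : Fin n → Bool, ((T s * T s) * wt x s) := by
    simp only [Finset.mul_sum]
    rw [← Finset.sum_sub_distrib,
      ← Finset.sum_sub_distrib, ← Finset.sum_add_distrib, ← Finset.sum_add_distrib,
      ← Finset.sum_add_distrib]
    exact Finset.sum_congr rfl fun s _ => by ring
  rw [expand, hA0, hA1, hA2, hA3, hA4, hA5] at key
  have heq : c - 2 * c * c - 2 * S + c ^ 2 * 1 + 2 * c * 0 + S = c - c ^ 2 - S := by ring
  linarith
end
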